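/- arXiv:1401.1053 — 3 statements merged into one kernel-verified Lean document; each statement's English description precedes it below -/
import Mathlib

section
/- The type family Stream of streams, with counit := head and cobind := sredec (the cosubstitution operation on streams defined corecursively by head(sredec f t) = f t and tail(sredec f t) = sredec f (tail t)), forms a comonad relative to the functor eq : Set → Setoid, where Stream A is taken as a setoid under bisimilarity. -/
/-- A relation on streams is a bisimulation if related streams have equal heads and
related tails. -/
def IsBisim {A : Type} (R : Stream' A → Stream' A → Prop) : Prop :=
  ∀ s t, R s t → s.head = t.head ∧ R s.tail t.tail

/-- Bisimilarity: the greatest bisimulation. -/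
def Bisim {A : Type} (s t : Stream' A) : Prop :=
  ∃ R, IsBisim R ∧ R s t

/-! Bisimilarity of streams is equality, so the setoid laws are equations between streams.
Cobind is the unique map that commutes with `tail` and has prescribed heads: any two maps of
streams that commute with `tail` and agree on heads are equal, by coinduction on the relation
`{(σ t, τ t)}`. Each comonad law compares two such maps. -/

theorem bisim_iff_eq {A : Type} {s t : Stream' A} : Bisim s t ↔ s = t :=
  ⟨fun ⟨_, hR, hst⟩ => Stream'.eq_of_bisim _ hR hst, fun h => ⟨Eq, fun _ _ h => h ▸ ⟨rfl, rfl⟩, h⟩⟩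

theorem bisim_eq_eq {A : Type} : @Bisim A = Eq :=
  funext₂ fun _ _ => propext bisim_iff_eq

theorem Stream'.eq_of_semiconj_tail {A B : Type} {σ τ : Stream' A → Stream' B}
    (hσ : Function.Semiconj σ Stream'.tail Stream'.tail)
    (hτ : Function.Semiconj τ Stream'.tail Stream'.tail)
    (hhead : ∀ t, (σ t).head = (τ t).head) : σ = τ := by
  funext t
  refine Stream'.eq_of_bisim (fun a b => ∃ t, a = σ t ∧ b = τ t) ?_ ⟨t, rfl, rfl⟩
  rintro _ _ ⟨t, rfl, rfl⟩
  exact ⟨hhead t, t.tail, (hσ t).symm, (hτ t).symm⟩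

/-- streams, with counit `head` and cobind `sredec` (the cosubstitution,
characterized corecursively by `head (sredec f t) = f t` and
`tail (sredec f t) = sredec f (tail t)`), form a comonad relative to
`eq : Set → Setoid`, where `Stream A` carries the setoid structure given by
bisimilarity.  Concretely: bisimilarity is an equivalence relation, `head` and
`sredec` are setoid morphisms (and `sredec` respects the hom-setoids), and the three
relative comonad laws hold up to the setoid equalities. -/
theorem stream_relative_comonad
    (sredec : ∀ {A B : Type}, (Stream' A → B) → Stream' A → Stream' B)
    (hhead : ∀ {A B : Type} (f : Stream' A → B) (t : Stream' A),
      (sredec f t).head = f t)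
    (htail : ∀ {A B : Type} (f : Stream' A → B) (t : Stream' A),
      (sredec f t).tail = sredec f t.tail) :
    -- Stream A is a setoid under bisimilarity
    (∀ A : Type, Equivalence (@Bisim A)) ∧
    -- the counit head is a setoid morphism into eq A
    (∀ (A : Type) (s t : Stream' A), Bisim s t → s.head = t.head) ∧
    -- cobind sends setoid morphisms to setoid morphisms
    (∀ (A B : Type) (f : Stream' A → B), (∀ s t, Bisim s t → f s = f t) →
      ∀ s t, Bisim s t → Bisim (sredec f s) (sredec f t)) ∧
    -- cobind respects the hom-setoids
    (∀ (A B : Type) (f g : Stream' A → B), (∀ t, f t = g t) →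
      ∀ t, Bisim (sredec f t) (sredec g t)) ∧
    -- first comonad law: cobind f followed by counit equals f
    (∀ (A B : Type) (f : Stream' A → B) (t : Stream' A), (sredec f t).head = f t) ∧
    -- second comonad law: cobind of the counit is the identity
    (∀ (A : Type) (t : Stream' A), Bisim (sredec Stream'.head t) t) ∧
    -- third comonad law: associativity of cosubstitution
    (∀ (A B C : Type) (f : Stream' A → B) (g : Stream' B → C) (t : Stream' A),
      Bisim (sredec g (sredec f t)) (sredec (fun x => g (sredec f x)) t)) := by
  have semiconj {A B : Type} (f : Stream' A → B) :
      Function.Semiconj (sredec f) Stream'.tail Stream'.tail :=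
    fun t => (htail f t).symm
  simp only [bisim_eq_eq]
  refine ⟨fun _ => eq_equivalence, fun _ _ _ h => congrArg _ h,
    fun _ _ _ _ _ _ h => congrArg _ h, fun _ _ f g hfg t => ?_, fun _ _ => hhead, fun _ t => ?_,
    fun _ _ _ f g t => ?_⟩
  · exact congrFun (Stream'.eq_of_semiconj_tail (semiconj f) (semiconj g) (by simp [hhead, hfg])) t
  · exact congrFun (Stream'.eq_of_semiconj_tail (τ := id) (semiconj _) (fun _ => rfl) (hhead _)) t
  · exact congrFun (Stream'.eq_of_semiconj_tail (σ := fun t => sredec g (sredec f t))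
      (fun t => by simp only [htail]) (semiconj _) (by simp [hhead])) t
end

section
/- Given a morphism τ : T → S of relative comonads over F and a comodule M over T towards E, the pushforward τ*M defined by (τ*M)(A) := MA and mcobind^{τ*M}(f) := mcobind^M(f ∘ τ_A) for f : D(SA, FB) is a comodule over S. -/
open CategoryTheory

/-- A comonad relative to a functor `F : C ⥤ D`. -/
structure RelComonad {C : Type*} [Category C] {D : Type*} [Category D] (F : C ⥤ D) where
  obj : C → D
  counit : ∀ A : C, obj A ⟶ F.obj A
  cobind : ∀ {A B : C}, (obj A ⟶ F.obj B) → (obj A ⟶ obj B)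
  cobind_counit : ∀ {A B : C} (f : obj A ⟶ F.obj B), cobind f ≫ counit B = f
  cobind_counit_id : ∀ A : C, cobind (counit A) = 𝟙 (obj A)
  cobind_cobind : ∀ {A B C' : C} (f : obj A ⟶ F.obj B) (g : obj B ⟶ F.obj C'),
      cobind f ≫ cobind g = cobind (cobind f ≫ g)

/-- Morphisms of relative comonads. -/
structure RelComonadHom {C : Type*} [Category C] {D : Type*} [Category D] {F : C ⥤ D}
    (T S : RelComonad F) where
  app : ∀ A : C, T.obj A ⟶ S.obj A
  counit_eq : ∀ A : C, T.counit A = app A ≫ S.counit A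
  cobind_eq : ∀ {A B : C} (f : S.obj A ⟶ F.obj B),
      T.cobind (app A ≫ f) ≫ app B = app A ≫ S.cobind f
/-- A comodule over a relative comonad `T` (over `F : C ⥤ D`) towards a category `E`. -/
structure Comodule {C : Type*} [Category C] {D : Type*} [Category D] {F : C ⥤ D}
    (T : RelComonad F) (E : Type*) [Category E] where
  obj : C → E
  mcobind : ∀ {A B : C}, (T.obj A ⟶ F.obj B) → (obj A ⟶ obj B)
  mcobind_counit : ∀ A : C, mcobind (T.counit A) = 𝟙 (obj A)
  mcobind_mcobind : ∀ {A B C' : C} (f : T.obj A ⟶ F.obj B) (g : T.obj B ⟶ F.obj C'),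
      mcobind f ≫ mcobind g = mcobind (T.cobind f ≫ g)

namespace Comodule

variable {C : Type*} [Category C] {D : Type*} [Category D] {E : Type*} [Category E]
  {F : C ⥤ D} {T S : RelComonad F}

def pushforward (τ : RelComonadHom T S) (M : Comodule T E) : Comodule S E where
  obj := M.obj
  mcobind {A _} f := M.mcobind (τ.app A ≫ f)
  mcobind_counit A := by rw [← τ.counit_eq, M.mcobind_counit]
  mcobind_mcobind f g := by
    rw [M.mcobind_mcobind, ← Category.assoc, τ.cobind_eq, Category.assoc]

end Comodule

/-- given a morphism `τ : T → S` of relative comonads over `F` and a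
comodule `M` over `T` towards `E`, the pushforward data
`(τ*M)(A) := M A`, `mcobind^{τ*M}(f) := mcobind^M(f ∘ τ_A)` satisfies the comodule
laws over `S`. -/
theorem pushforward_comodule {C : Type*} [Category C] {D : Type*} [Category D]
    {E : Type*} [Category E] {F : C ⥤ D} {T S : RelComonad F}
    (τ : RelComonadHom T S) (M : Comodule T E) :
    (∀ A : C, M.mcobind (τ.app A ≫ S.counit A) = 𝟙 (M.obj A)) ∧
    (∀ (A B C' : C) (f : S.obj A ⟶ F.obj B) (g : S.obj B ⟶ F.obj C'),
      M.mcobind (τ.app A ≫ f) ≫ M.mcobind (τ.app B ≫ g) =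
        M.mcobind (τ.app A ≫ S.cobind f ≫ g)) :=
  ⟨(M.pushforward τ).mcobind_counit, fun _ _ _ => (M.pushforward τ).mcobind_mcobind⟩
end

section
/- Any comonad T relative to a strong monoidal functor F : C → D between cartesian monoidal categories can be equipped with a canonical cut operation relative to a fixed object E : C₀, given by ccut_A := lift^T(pr₂(E,A)) : T(E×A) → TA, and this operation satisfies the two laws of a relative comonad with cut. -/
open CategoryTheory Limits

/-- The functorial action of a relative comonad. -/
def RelComonad.lift {C : Type*} [Category C] {D : Type*} [Category D] {F : C ⥤ D}
    (T : RelComonad F) {A B : C} (f : A ⟶ B) : T.obj A ⟶ T.obj B :=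
  T.cobind (T.counit A ≫ F.map f)


variable {C : Type*} [Category C] {D : Type*} [Category D]
  [Limits.HasBinaryProducts C] [Limits.HasBinaryProducts D]

/-- The canonical comparison map `F(A × B) ⟶ F A × F B`; `F` being strong monoidal
means that this map is an isomorphism. -/
noncomputable def phiF (F : C ⥤ D) (A B : C) : F.obj (A ⨯ B) ⟶ F.obj A ⨯ F.obj B :=
  prod.lift (F.map prod.fst) (F.map prod.snd)

/-- The canonical cut operation on a relative comonad: `ccut_A := lift(pr₂)`. -/
noncomputable def ccut {F : C ⥤ D} (T : RelComonad F) (E A : C) : T.obj (E ⨯ A) ⟶ T.obj A :=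
  T.lift (prod.snd : E ⨯ A ⟶ A)

/-- The `extend` operation associated to a cut operation:
`extend f := φ⁻¹ ∘ (counit_E × f) ∘ ⟨T(pr₁), cut⟩`. -/
noncomputable def extendC {F : C ⥤ D} [∀ A B : C, IsIso (phiF F A B)] (T : RelComonad F)
    (E : C) {A B : C} (f : T.obj A ⟶ F.obj B) :
    T.obj (E ⨯ A) ⟶ F.obj (E ⨯ B) :=
  prod.lift (T.lift (prod.fst : E ⨯ A ⟶ E) ≫ T.counit E) (ccut T E A ≫ f) ≫
    inv (phiF F E B)

namespace RelComonad

variable {X : Type*} [Category X] {Y : Type*} [Category Y] {G : X ⥤ Y} (T : RelComonad G)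

theorem lift_comp_cobind {A B B' : X} (g : A ⟶ B) (f : T.obj B ⟶ G.obj B') :
    T.lift g ≫ T.cobind f = T.cobind (T.lift g ≫ f) :=
  T.cobind_cobind _ _

theorem cobind_comp_lift {A B B' : X} (f : T.obj A ⟶ G.obj B) (g : B ⟶ B') :
    T.cobind f ≫ T.lift g = T.cobind (f ≫ G.map g) := by
  rw [lift, T.cobind_cobind, ← Category.assoc, T.cobind_counit]

end RelComonad

theorem inv_phiF_comp_map_snd (F : C ⥤ D) [∀ A B : C, IsIso (phiF F A B)] (A B : C) :
    inv (phiF F A B) ≫ F.map prod.snd = prod.snd := by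
  rw [IsIso.inv_comp_eq, phiF, prod.lift_snd]

theorem extendC_comp_map_snd {F : C ⥤ D} [∀ A B : C, IsIso (phiF F A B)] (T : RelComonad F)
    (E : C) {A B : C} (f : T.obj A ⟶ F.obj B) :
    extendC T E f ≫ F.map prod.snd = ccut T E A ≫ f := by
  rw [extendC, Category.assoc, inv_phiF_comp_map_snd, prod.lift_snd]

/-- any comonad `T` relative to a strong monoidal functor `F` between
cartesian monoidal categories can be equipped with a canonical cut operation relative
to a fixed object `E`, namely `ccut_A := lift(pr₂)`, and this operation satisfies the
two laws of a relative comonad with cut. -/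
theorem canonical_cut_laws (F : C ⥤ D) [∀ A B : C, IsIso (phiF F A B)]
    (T : RelComonad F) (E : C) :
    (∀ A : C, ccut T E A ≫ T.counit A = T.lift (prod.snd : E ⨯ A ⟶ A) ≫ T.counit A) ∧
    (∀ (A B : C) (f : T.obj A ⟶ F.obj B),
      ccut T E A ≫ T.cobind f = T.cobind (extendC T E f) ≫ ccut T E B) := by
  refine ⟨fun A => rfl, fun A B f => ?_⟩
  calc ccut T E A ≫ T.cobind f
      = T.cobind (ccut T E A ≫ f) := T.lift_comp_cobind _ _
    _ = T.cobind (extendC T E f ≫ F.map prod.snd) := by rw [extendC_comp_map_snd]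
    _ = T.cobind (extendC T E f) ≫ ccut T E B := (T.cobind_comp_lift _ _).symm
end
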